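/- arXiv:math/0608566 — 5 statements merged into one kernel-verified Lean document; each statement's English description precedes it below -/
import Mathlib

section
/- For every prime p ≥ 5, the harmonic sum ∑_{j=1}^{p-1} 1/j, written as a single fraction a/b in lowest terms, has numerator a divisible by p². -/
private lemma sum_sq_cast (R : Type*) [CommRing R] (n : ℕ) :
    (∑ i ∈ Finset.range n, (i : R)^2) * 6 = (n : R) * ((n:R) - 1) * (2*(n:R) - 1) := by
  induction n with
  | zero => simp
  | succ n ih =>
    rw [Finset.sum_range_succ, add_mul, ih]
    push_cast
    ring

private lemma pmul_eq_zero (p : ℕ) [NeZero p] (x : ZMod (p^2))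
    (h : (x.val : ZMod p) = 0) : (p : ZMod (p^2)) * x = 0 := by
  obtain ⟨k, hk⟩ := (ZMod.natCast_eq_zero_iff _ _).mp h
  have hx : ((x.val : ℕ) : ZMod (p^2)) = x := ZMod.natCast_rightInverse x
  rw [← hx, hk]
  push_cast
  rw [← mul_assoc, ← sq, show ((p:ZMod (p^2)))^2 = ((p^2 : ℕ) : ZMod (p^2)) by push_cast; ring,
    ZMod.natCast_self, zero_mul]

theorem wolstenholme (p : ℕ) (hp : p.Prime) (hp5 : 5 ≤ p) :
    (p : ℤ)^2 ∣ (∑ j ∈ Finset.Icc 1 (p - 1), (1 / (j : ℚ))).num := by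
  haveI : Fact p.Prime := ⟨hp⟩
  haveI : NeZero p := ⟨hp.ne_zero⟩
  haveI : NeZero (p^2) := ⟨pow_ne_zero 2 hp.ne_zero⟩
  set I : Finset ℕ := Finset.Icc 1 (p - 1) with hI
  have hmem : ∀ j ∈ I, 1 ≤ j ∧ j ≤ p - 1 := by
    intro j hj; rw [hI, Finset.mem_Icc] at hj; exact hj
  have hnd : ∀ j ∈ I, ¬ p ∣ j := by
    intro j hj hdvd
    obtain ⟨h1, h2⟩ := hmem j hj
    have := Nat.le_of_dvd (by omega) hdvd
    omega
  -- units in ZMod (p^2)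
  have hu : ∀ j ∈ I, IsUnit ((j : ℕ) : ZMod (p^2)) := by
    intro j hj
    rw [ZMod.isUnit_iff_coprime]
    exact ((hp.coprime_iff_not_dvd.mpr (hnd j hj)).symm).pow_right 2
  -- key sum
  set S : ZMod (p^2) := ∑ j ∈ I, ((j : ℕ) : ZMod (p^2))⁻¹ with hSdef
  set V : ZMod (p^2) := ∑ j ∈ I, (((j : ℕ) : ZMod (p^2))⁻¹)^2 with hVdef
  -- reindex j ↦ p - j
  have hmemI : ∀ j ∈ I, p - j ∈ I := by
    intro j hj; obtain ⟨h1, h2⟩ := hmem j hj; rw [hI, Finset.mem_Icc]; omega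
  have hS' : S = ∑ j ∈ I, (((p - j : ℕ) : ZMod (p^2)))⁻¹ := by
    rw [hSdef]
    refine Finset.sum_nbij' (fun k => p - k) (fun k => p - k) hmemI hmemI ?_ ?_ ?_
    · intro a ha; obtain ⟨h1, h2⟩ := hmem a ha; beta_reduce; omega
    · intro a ha; obtain ⟨h1, h2⟩ := hmem a ha; beta_reduce; omega
    · intro a ha; obtain ⟨h1, h2⟩ := hmem a ha
      beta_reduce
      congr 2
      omega
  -- pairing identity
  have hpair : ∀ j ∈ I, ((j:ℕ) : ZMod (p^2))⁻¹ + (((p - j : ℕ) : ZMod (p^2)))⁻¹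
      = -((p : ZMod (p^2)) * (((j:ℕ) : ZMod (p^2))⁻¹)^2) := by
    intro j hj
    obtain ⟨h1, h2⟩ := hmem j hj
    set a : ZMod (p^2) := ((j:ℕ) : ZMod (p^2)) with hadef
    set b : ZMod (p^2) := (((p - j : ℕ)) : ZMod (p^2)) with hbdef
    have ua : IsUnit a := hu j hj
    have ub : IsUnit b := hu _ (hmemI j hj)
    have ha : a * a⁻¹ = 1 := ZMod.mul_inv_of_unit a ua
    have hb : b * b⁻¹ = 1 := ZMod.mul_inv_of_unit b ub
    have hab : a + b = (p : ZMod (p^2)) := by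
      rw [hadef, hbdef, ← Nat.cast_add]
      congr 1
      omega
    have hpp : (p : ZMod (p^2)) * (p : ZMod (p^2)) = 0 := by
      rw [← sq, show ((p:ZMod (p^2)))^2 = ((p^2 : ℕ) : ZMod (p^2)) by push_cast; ring,
        ZMod.natCast_self]
    have key : (a⁻¹ + b⁻¹ + (p : ZMod (p^2)) * (a⁻¹)^2) * (a^2 * b) = 0 := by
      have expand : (a⁻¹ + b⁻¹ + (p : ZMod (p^2)) * (a⁻¹)^2) * (a^2 * b)
          = (a * a⁻¹) * (a * b) + (b * b⁻¹) * a^2 + (p : ZMod (p^2)) * (a * a⁻¹)^2 * b := by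
        ring
      rw [expand, ha, hb, one_mul, one_mul, one_pow, mul_one]
      have : a * b + a ^ 2 + (p : ZMod (p^2)) * b = (a + (p : ZMod (p^2))) * (a + b) - a * (p:ZMod (p^2)) := by ring
      rw [this, hab]
      linear_combination hpp
    have hunit : IsUnit (a^2 * b) := (ua.pow 2).mul ub
    have := hunit.mul_right_cancel (key.trans (zero_mul (a^2*b)).symm)
    linear_combination this
  -- S + S = -(p * V)
  have hSS : S + S = -((p : ZMod (p^2)) * V) := by
    have step : S + S = ∑ j ∈ I, (((j:ℕ) : ZMod (p^2))⁻¹ + (((p - j : ℕ) : ZMod (p^2)))⁻¹) := by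
      rw [Finset.sum_add_distrib, ← hSdef, ← hS']
    rw [step]
    rw [show ∑ j ∈ I, (((j:ℕ) : ZMod (p^2))⁻¹ + (((p - j : ℕ) : ZMod (p^2)))⁻¹)
        = ∑ j ∈ I, -((p : ZMod (p^2)) * (((j:ℕ) : ZMod (p^2))⁻¹)^2) from
      Finset.sum_congr rfl (fun j hj => hpair j hj)]
    rw [hVdef, Finset.mul_sum, ← Finset.sum_neg_distrib]
  -- p * V = 0
  have hpV : (p : ZMod (p^2)) * V = 0 := by
    apply pmul_eq_zero
    -- castHom to ZMod p
    have hcast : (V.val : ZMod p) = (ZMod.castHom (dvd_pow_self p two_ne_zero) (ZMod p)) V := by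
      rw [ZMod.castHom_apply, ZMod.natCast_val]
    rw [hcast, hVdef, map_sum]
    have hterm : ∀ j ∈ I, (ZMod.castHom (dvd_pow_self p two_ne_zero) (ZMod p))
        ((((j:ℕ) : ZMod (p^2))⁻¹)^2) = (((j:ℕ) : ZMod p)⁻¹)^2 := by
      intro j hj
      rw [map_pow]
      congr 1
      have h1 : ((j:ℕ) : ZMod p) * (ZMod.castHom (dvd_pow_self p two_ne_zero) (ZMod p))
          (((j:ℕ) : ZMod (p^2))⁻¹) = 1 := by
        rw [show ((j:ℕ) : ZMod p) = (ZMod.castHom (dvd_pow_self p two_ne_zero) (ZMod p))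
          ((j:ℕ) : ZMod (p^2)) by rw [map_natCast], ← map_mul,
          ZMod.mul_inv_of_unit _ (hu j hj), map_one]
      exact (inv_eq_of_mul_eq_one_right h1).symm
    rw [Finset.sum_congr rfl hterm]
    -- now sum over ZMod p of inverse squares = sum of squares
    have hW : ∑ j ∈ I, (((j:ℕ) : ZMod p)⁻¹)^2 = ∑ j ∈ I, ((j:ℕ) : ZMod p)^2 := by
      have hne : ∀ j ∈ I, ((j:ℕ) : ZMod p) ≠ 0 := by
        intro j hj h0
        exact hnd j hj ((ZMod.natCast_eq_zero_iff _ _).mp h0)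
      refine Finset.sum_nbij' (fun k => (((k:ℕ) : ZMod p)⁻¹).val) (fun k => (((k:ℕ) : ZMod p)⁻¹).val)
        ?_ ?_ ?_ ?_ ?_
      · intro a ha
        beta_reduce
        rw [hI, Finset.mem_Icc]
        have hlt := ZMod.val_lt (((a:ℕ) : ZMod p)⁻¹)
        have hnz : (((a:ℕ) : ZMod p)⁻¹).val ≠ 0 := by
          rw [Ne, ZMod.val_eq_zero]
          exact inv_ne_zero (hne a ha)
        omega
      · intro a ha
        beta_reduce
        rw [hI, Finset.mem_Icc]
        have hlt := ZMod.val_lt (((a:ℕ) : ZMod p)⁻¹)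
        have hnz : (((a:ℕ) : ZMod p)⁻¹).val ≠ 0 := by
          rw [Ne, ZMod.val_eq_zero]
          exact inv_ne_zero (hne a ha)
        omega
      · intro a ha
        obtain ⟨h1, h2⟩ := hmem a ha
        beta_reduce
        rw [ZMod.natCast_rightInverse _, inv_inv, ZMod.val_cast_of_lt (by omega)]
      · intro a ha
        obtain ⟨h1, h2⟩ := hmem a ha
        beta_reduce
        rw [ZMod.natCast_rightInverse _, inv_inv, ZMod.val_cast_of_lt (by omega)]
      · intro a ha
        beta_reduce
        rw [ZMod.natCast_rightInverse _]
    rw [hW]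
    -- sum of squares over Icc 1 (p-1) = sum over range p
    have hrange : ∑ j ∈ Finset.range p, ((j:ℕ) : ZMod p)^2 = ∑ j ∈ I, ((j:ℕ) : ZMod p)^2 := by
      rw [Finset.range_eq_Ico, Finset.sum_eq_sum_Ico_succ_bot (by omega : 0 < p)]
      rw [hI, show Finset.Icc 1 (p-1) = Finset.Ico 1 p by
        rw [← Finset.Ico_add_one_right_eq_Icc]; congr 1; omega]
      simp
    rw [← hrange]
    -- use the closed formula
    have h6 : IsUnit ((6:ℕ) : ZMod p) := by
      rw [ZMod.isUnit_iff_coprime]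
      have h2 : Nat.Coprime 2 p := (Nat.coprime_primes Nat.prime_two hp).mpr (by omega)
      have h3 : Nat.Coprime 3 p := (Nat.coprime_primes Nat.prime_three hp).mpr (by omega)
      exact (show (6:ℕ) = 2*3 by norm_num) ▸ Nat.Coprime.mul h2 h3
    have hs := sum_sq_cast (ZMod p) p
    rw [ZMod.natCast_self] at hs
    simp only [zero_mul, zero_sub, mul_zero] at hs
    have h6' : ((6:ℕ) : ZMod p) = (6 : ZMod p) := by push_cast; ring
    refine h6.mul_left_eq_zero.mp ?_
    rw [h6']
    exact hs
  -- S = 0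
  have hS0 : S = 0 := by
    have h2S : (2 : ZMod (p^2)) * S = 0 := by
      rw [two_mul, hSS, hpV, neg_zero]
    have hu2 : IsUnit (((2:ℕ)) : ZMod (p^2)) := by
      rw [ZMod.isUnit_iff_coprime]
      exact ((Nat.coprime_primes Nat.prime_two hp).mpr (by omega)).pow_right 2
    have h2' : (((2:ℕ)) : ZMod (p^2)) = (2 : ZMod (p^2)) := by push_cast; ring
    rw [← h2'] at h2S
    exact hu2.mul_left_cancel (h2S.trans (mul_zero _).symm)
  -- integer sum N
  set M : ℕ := (p-1).factorial with hMdef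
  have hMd : ∀ j ∈ I, j ∣ M := by
    intro j hj
    obtain ⟨h1, h2⟩ := hmem j hj
    exact Nat.dvd_factorial (by omega) h2
  set N : ℕ := ∑ j ∈ I, M / j with hNdef
  -- p^2 ∣ N
  have hNz : ((N : ℕ) : ZMod (p^2)) = 0 := by
    rw [hNdef, Nat.cast_sum]
    have hterm : ∀ j ∈ I, ((M / j : ℕ) : ZMod (p^2)) = ((j:ℕ) : ZMod (p^2))⁻¹ * (M : ZMod (p^2)) := by
      intro j hj
      have hmul : ((j:ℕ) : ZMod (p^2)) * ((M / j : ℕ) : ZMod (p^2)) = (M : ZMod (p^2)) := by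
        rw [← Nat.cast_mul, Nat.mul_div_cancel' (hMd j hj)]
      have hinv : ((j:ℕ) : ZMod (p^2))⁻¹ * ((j:ℕ) : ZMod (p^2)) = 1 :=
        ZMod.inv_mul_of_unit _ (hu j hj)
      calc ((M / j : ℕ) : ZMod (p^2)) = (((j:ℕ) : ZMod (p^2))⁻¹ * ((j:ℕ) : ZMod (p^2))) * ((M / j : ℕ) : ZMod (p^2)) := by
              rw [hinv, one_mul]
        _ = ((j:ℕ) : ZMod (p^2))⁻¹ * (M : ZMod (p^2)) := by rw [mul_assoc, hmul]
    rw [Finset.sum_congr rfl hterm, ← Finset.sum_mul, ← hSdef, hS0, zero_mul]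
  have hNdvd : (p:ℤ)^2 ∣ (N : ℤ) := by
    have := (ZMod.natCast_eq_zero_iff N (p^2)).mp hNz
    exact_mod_cast Int.natCast_dvd_natCast.mpr this
  -- connect to rational sum
  set H : ℚ := ∑ j ∈ Finset.Icc 1 (p - 1), (1 / (j : ℚ)) with hHdef
  have hHM : H * (M : ℚ) = (N : ℚ) := by
    rw [hHdef, hNdef, Finset.sum_mul, Nat.cast_sum]
    refine Finset.sum_congr rfl ?_
    intro j hj
    obtain ⟨h1, h2⟩ := hmem j hj
    have hjne : ((j:ℕ) : ℚ) ≠ 0 := Nat.cast_ne_zero.mpr (by omega)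
    rw [Nat.cast_div (hMd j hj) hjne, one_div, inv_mul_eq_div]
  have hkey : H.num * (M : ℤ) = (N : ℤ) * (H.den : ℤ) := by
    have hden : (H.den : ℚ) ≠ 0 := Nat.cast_ne_zero.mpr H.den_nz
    have h2 : H * (H.den : ℚ) = (H.num : ℚ) := by
      nth_rewrite 1 [← Rat.num_div_den H]
      exact div_mul_cancel₀ _ hden
    have h1 : (H.num : ℚ) * (M : ℚ) = (N : ℚ) * (H.den : ℚ) := by
      rw [← h2, mul_right_comm, hHM]
    exact_mod_cast h1
  have hcop : IsCoprime ((p:ℤ)^2) ((M:ℕ) : ℤ) := by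
    rw [Int.isCoprime_iff_gcd_eq_one]
    have hpM : ¬ p ∣ M := by
      rw [hMdef, hp.dvd_factorial]
      omega
    have : Nat.Coprime (p^2) M := (hp.coprime_iff_not_dvd.mpr hpM).pow_left 2
    rw [show ((p:ℤ)^2) = (((p^2 : ℕ):ℕ) : ℤ) by push_cast; ring, Int.gcd_natCast_natCast]
    exact this
  have hfinal : (p:ℤ)^2 ∣ H.num * (M : ℤ) := by
    rw [hkey]
    exact Dvd.dvd.mul_right hNdvd _
  exact hcop.dvd_of_dvd_mul_right hfinal
end

section
/- Let n ≥ 1 and let q be an indeterminate. Then 24·∑_{j=1}^{n-1} 1/[j]_q ≡ 12(n-1)(1-q) + (n²-1)(1-q)²[n]_q modulo Φ_n(q)², as an identity of rational functions over ℚ, i.e. the difference is a rational function whose numerator (after clearing the denominators ∏_{j=1}^{n-1}[j]_q) is divisible by Φ_n(q)² in ℚ[q]. -/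
open Polynomial Finset

/-- The q-integer [j]_q = 1 + q + ⋯ + q^{j-1} as a polynomial. -/
noncomputable def qInt (j : ℕ) : Polynomial ℚ := ∑ i ∈ Finset.range j, Polynomial.X ^ i

/-!
Work in `ℚ[q] ⧸ 𝔭 ^ 2`, where `𝔭 = (Φₙ)` is the kernel of evaluation at a primitive `n`-th root
of unity `ζ`; there every `wⱼ = 1 - q ^ j = (1 - q) [j]_q` with `0 < j < n` is invertible.
The identity `wⱼ + wₙ₋ⱼ = wⱼ wₙ₋ⱼ + wₙ` gives `1 / wⱼ + 1 / wₙ₋ⱼ = 1 + wₙ / (wⱼ wₙ₋ⱼ)`, so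
`2 ∑ 1 / wⱼ = (n - 1) + wₙ ∑ 1 / (wⱼ wₙ₋ⱼ)`. As `wₙ ∈ 𝔭`, the last sum only matters modulo `𝔭`,
i.e. after evaluation at `ζ`, where `∑ 1 / ((1 - ζ ^ j) (1 - ζ ^ (n - j))) = (n ^ 2 - 1) / 12`.
This value comes from `1 / (1 - x) = -(1 / n) ∑_{k < n} (k + 1) x ^ k` for `x ^ n = 1 ≠ x`
and the orthogonality of the characters `j ↦ ζ ^ (j m)`.
-/

open scoped Ring

theorem one_sub_mul_sum_range_add_one_mul_pow {R : Type*} [CommRing R] (x : R) (m : ℕ) :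
    (1 - x) * ∑ k ∈ range m, ((k : R) + 1) * x ^ k = ∑ k ∈ range m, x ^ k - m * x ^ m := by
  induction m with
  | zero => simp
  | succ m ih =>
    simp only [sum_range_succ, mul_add, ih]
    push_cast
    ring

theorem two_mul_sum_range_add_one {R : Type*} [CommSemiring R] (m : ℕ) :
    2 * ∑ k ∈ range m, ((k : R) + 1) = m * ((m : R) + 1) := by
  induction m with
  | zero => simp
  | succ m ih =>
    rw [sum_range_succ, mul_add, ih]
    push_cast
    ring

theorem six_mul_sum_range_add_one_sq {R : Type*} [CommSemiring R] (m : ℕ) :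
    6 * ∑ k ∈ range m, ((k : R) + 1) ^ 2 = m * ((m : R) + 1) * (2 * m + 1) := by
  induction m with
  | zero => simp
  | succ m ih =>
    rw [sum_range_succ, mul_add, ih]
    push_cast
    ring

theorem sum_sum_mul_mul_ite {R ι : Type*} [CommRing R] [DecidableEq ι] (s : Finset ι)
    (a : ι → R) (c d : R) :
    ∑ k ∈ s, ∑ l ∈ s, a k * a l * (if k = l then c else d)
      = (c - d) * ∑ k ∈ s, a k ^ 2 + d * (∑ k ∈ s, a k) ^ 2 := by
  have hsplit : ∀ k l, a k * a l * (if k = l then c else d)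
      = (if k = l then (c - d) * a k ^ 2 else 0) + d * (a k * a l) := by
    intro k l
    split_ifs with h
    · subst h; ring
    · ring
  simp only [hsplit, sum_add_distrib, sum_ite_eq]
  simp [sq, mul_sum, mul_comm]

theorem Icc_one_sub_one_eq_Ico (n : ℕ) : Icc 1 (n - 1) = Ico 1 n := by
  ext j
  simp only [mem_Icc, mem_Ico]
  omega

theorem sum_Icc_one_sub_one_reflect {M : Type*} [AddCommMonoid M] (f : ℕ → M) (n : ℕ) :
    ∑ j ∈ Icc 1 (n - 1), f (n - j) = ∑ j ∈ Icc 1 (n - 1), f j := by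
  rw [Icc_one_sub_one_eq_Ico, sum_Ico_reflect f 1 (Nat.le_succ n), Nat.add_sub_cancel_left,
    Nat.add_sub_cancel]

section RootsOfUnity

variable {K : Type*} [Field K] {n : ℕ}

theorem geom_sum_eq_zero_of_pow_eq_one {x : K} (hx : x ^ n = 1) (hx1 : x ≠ 1) :
    ∑ k ∈ range n, x ^ k = 0 := by
  rw [geom_sum_eq hx1, hx, sub_self, zero_div]

theorem inv_one_sub_eq_of_pow_eq_one {x : K} (hx : x ^ n = 1) (hx1 : x ≠ 1) (hn : (n : K) ≠ 0) :
    (1 - x)⁻¹ = -(n : K)⁻¹ * ∑ k ∈ range n, ((k : K) + 1) * x ^ k := by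
  have h := one_sub_mul_sum_range_add_one_mul_pow x n
  rw [geom_sum_eq_zero_of_pow_eq_one hx hx1, hx] at h
  refine inv_eq_of_mul_eq_one_right ?_
  rw [mul_left_comm, h]
  field_simp
  ring

theorem IsPrimitiveRoot.sum_Icc_pow_mul_pow_sub {ζ : K} (hζ : IsPrimitiveRoot ζ n) {k l : ℕ}
    (hk : k < n) (hl : l < n) :
    ∑ j ∈ Icc 1 (n - 1), (ζ ^ j) ^ k * (ζ ^ (n - j)) ^ l = if k = l then (n : K) - 1 else -1 := by
  set y := ζ ^ (n + k - l)
  have hterm : ∀ j ∈ Icc 1 (n - 1), (ζ ^ j) ^ k * (ζ ^ (n - j)) ^ l = y ^ j := by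
    intro j hj
    have hjn : j ≤ n := by simp only [mem_Icc] at hj; omega
    have hexp : j * k + (n - j) * l + n * j = (n + k - l) * j + n * l := by
      zify [hjn, show l ≤ n + k by omega]
      ring
    have hmod : j * k + (n - j) * l ≡ (n + k - l) * j [MOD n] := by
      unfold Nat.ModEq
      rw [← Nat.add_mul_mod_self_left _ n j, hexp, Nat.add_mul_mod_self_left]
    rw [← pow_mul, ← pow_mul, ← pow_add, ← pow_mul, pow_eq_pow_of_modEq hmod hζ.pow_eq_one]
  have hyn : y ^ n = 1 := by rw [← pow_mul, mul_comm, pow_mul, hζ.pow_eq_one, one_pow]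
  have hsplit : ∑ j ∈ range n, y ^ j = 1 + ∑ j ∈ Ico 1 n, y ^ j := by
    rw [sum_range_eq_add_Ico _ (by omega), pow_zero]
  rw [sum_congr rfl hterm, Icc_one_sub_one_eq_Ico, eq_sub_of_add_eq' hsplit.symm]
  split_ifs with hkl
  · simp [y, hkl, hζ.pow_eq_one]
  · have hy1 : y ≠ 1 := by
      rw [Ne, hζ.pow_eq_one_iff_dvd]
      rintro ⟨c, hc⟩
      rcases c with _ | _ | c
      · omega
      · omega
      · nlinarith [show n + k - l < 2 * n by omega]
    rw [geom_sum_eq_zero_of_pow_eq_one hyn hy1, zero_sub]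

theorem IsPrimitiveRoot.twelve_mul_sum_inv_one_sub_pow_mul_inv {ζ : K} (hζ : IsPrimitiveRoot ζ n)
    (hn : 0 < n) :
    12 * ∑ j ∈ Icc 1 (n - 1), (1 - ζ ^ j)⁻¹ * (1 - ζ ^ (n - j))⁻¹ = (n : K) ^ 2 - 1 := by
  have hn0 : (n : K) ≠ 0 := by
    have := NeZero.of_pos hn
    exact hζ.neZero'.out
  have hinv : ∀ j ∈ Icc 1 (n - 1),
      (1 - ζ ^ j)⁻¹ = -(n : K)⁻¹ * ∑ k ∈ range n, ((k : K) + 1) * (ζ ^ j) ^ k := by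
    intro j hj
    simp only [mem_Icc] at hj
    refine inv_one_sub_eq_of_pow_eq_one ?_ (hζ.pow_ne_one_of_pos_of_lt (by omega) (by omega)) hn0
    rw [← pow_mul, mul_comm, pow_mul, hζ.pow_eq_one, one_pow]
  have hexpand : ∀ j ∈ Icc 1 (n - 1), (1 - ζ ^ j)⁻¹ * (1 - ζ ^ (n - j))⁻¹
      = (n : K)⁻¹ ^ 2 * ∑ k ∈ range n, ∑ l ∈ range n,
          ((k : K) + 1) * ((l : K) + 1) * ((ζ ^ j) ^ k * (ζ ^ (n - j)) ^ l) := by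
    intro j hj
    have hj' : n - j ∈ Icc 1 (n - 1) := by simp only [mem_Icc] at hj ⊢; omega
    rw [hinv j hj, hinv _ hj', mul_mul_mul_comm, neg_mul_neg, ← sq, sum_mul_sum]
    congr 1
    exact sum_congr rfl fun k _ => sum_congr rfl fun l _ => by ring
  set S₁ := ∑ k ∈ range n, ((k : K) + 1)
  set S₂ := ∑ k ∈ range n, ((k : K) + 1) ^ 2
  have hS : 12 * (n * S₂ - S₁ ^ 2) = (n : K) ^ 2 * ((n : K) ^ 2 - 1) := by
    linear_combination (2 * (n : K)) * six_mul_sum_range_add_one_sq (R := K) n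
      - 3 * (2 * S₁ + n * (n + 1)) * two_mul_sum_range_add_one (R := K) n
  calc 12 * ∑ j ∈ Icc 1 (n - 1), (1 - ζ ^ j)⁻¹ * (1 - ζ ^ (n - j))⁻¹
      = 12 * (n : K)⁻¹ ^ 2 * ∑ k ∈ range n, ∑ l ∈ range n, ((k : K) + 1) * ((l : K) + 1) *
          ∑ j ∈ Icc 1 (n - 1), (ζ ^ j) ^ k * (ζ ^ (n - j)) ^ l := by
        rw [sum_congr rfl hexpand, ← mul_sum, sum_comm, mul_assoc]
        simp only [mul_sum]
        exact sum_congr rfl fun k _ => sum_comm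
    _ = 12 * (n : K)⁻¹ ^ 2 * ∑ k ∈ range n, ∑ l ∈ range n,
          ((k : K) + 1) * ((l : K) + 1) * (if k = l then (n : K) - 1 else -1) := by
        congr 1
        refine sum_congr rfl fun k hk => sum_congr rfl fun l hl => ?_
        rw [hζ.sum_Icc_pow_mul_pow_sub (mem_range.mp hk) (mem_range.mp hl)]
    _ = (n : K)⁻¹ ^ 2 * (12 * (n * S₂ - S₁ ^ 2)) := by
        rw [sum_sum_mul_mul_ite]
        ring
    _ = (n : K) ^ 2 - 1 := by
        rw [hS]
        field_simp

end RootsOfUnity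

theorem sum_prod_erase_eq_sum_inverse_mul_prod {ι R : Type*} [CommSemiring R] [DecidableEq ι]
    {s : Finset ι} {a : ι → R} (ha : ∀ i ∈ s, IsUnit (a i)) :
    ∑ i ∈ s, ∏ j ∈ s.erase i, a j = (∑ i ∈ s, (a i)⁻¹ʳ) * ∏ j ∈ s, a j := by
  rw [sum_mul]
  refine sum_congr rfl fun i hi => ?_
  rw [← mul_prod_erase s a hi, Ring.inverse_mul_cancel_left _ _ (ha i hi)]

theorem IsUnit.map_ringInverse {R K : Type*} [Semiring R] [DivisionRing K] (f : R →+* K) {x : R}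
    (hx : IsUnit x) : f x⁻¹ʳ = (f x)⁻¹ :=
  (inv_eq_of_mul_eq_one_right (by rw [← map_mul, Ring.mul_inverse_cancel x hx, map_one])).symm

section RingInverse

variable {R : Type*} [CommRing R]

theorem Ring.inverse_add_inverse_of_add_eq {a b u : R} (ha : IsUnit a) (hb : IsUnit b)
    (h : a + b = a * b + u) : a⁻¹ʳ + b⁻¹ʳ = 1 + u * (a⁻¹ʳ * b⁻¹ʳ) := by
  have ha' := Ring.mul_inverse_cancel a ha
  have hb' := Ring.mul_inverse_cancel b hb
  linear_combination (a⁻¹ʳ * b⁻¹ʳ) * h + (b * b⁻¹ʳ - b⁻¹ʳ) * ha' + (1 - a⁻¹ʳ) * hb'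

theorem Ring.inverse_eq_mul_inverse_mul {a b : R} (h : IsUnit (a * b)) : b⁻¹ʳ = a * (a * b)⁻¹ʳ := by
  rw [Ring.mul_inverse_rev, mul_left_comm, Ring.mul_inverse_cancel a (isUnit_of_mul_isUnit_left h),
    mul_one]

variable [Algebra ℚ R] {K : Type*} [Field K] (χ : R →+* K) {n : ℕ} {t : R}

theorem twentyfour_mul_sum_inverse_one_sub_pow (hn : 0 < n) (hζ : IsPrimitiveRoot (χ t) n)
    (hker : ∀ x, χ x = 0 → (1 - t ^ n) * x = 0) (hunit : ∀ j ∈ Icc 1 (n - 1), IsUnit (1 - t ^ j)) :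
    24 * ∑ j ∈ Icc 1 (n - 1), (1 - t ^ j)⁻¹ʳ
      = 12 * ((n : R) - 1) + ((n : R) ^ 2 - 1) * (1 - t ^ n) := by
  have hrefl : ∀ j ∈ Icc 1 (n - 1), n - j ∈ Icc 1 (n - 1) := by
    intro j hj
    simp only [mem_Icc] at hj ⊢
    omega
  have hpair : ∀ j ∈ Icc 1 (n - 1), (1 - t ^ j)⁻¹ʳ + (1 - t ^ (n - j))⁻¹ʳ
      = 1 + (1 - t ^ n) * ((1 - t ^ j)⁻¹ʳ * (1 - t ^ (n - j))⁻¹ʳ) := by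
    intro j hj
    refine Ring.inverse_add_inverse_of_add_eq (hunit j hj) (hunit _ (hrefl j hj)) ?_
    have hjn : j ≤ n := by simp only [mem_Icc] at hj; omega
    rw [← Nat.add_sub_cancel' hjn, pow_add, Nat.add_sub_cancel_left]
    ring
  -- `1 - t ^ n` kills `ker χ`, so only the image of the last sum under `χ` matters
  have hres : (1 - t ^ n) * (12 * ∑ j ∈ Icc 1 (n - 1), (1 - t ^ j)⁻¹ʳ * (1 - t ^ (n - j))⁻¹ʳ)
      = (1 - t ^ n) * ((n : R) ^ 2 - 1) := by
    rw [← sub_eq_zero, ← mul_sub]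
    refine hker _ ?_
    rw [map_sub, sub_eq_zero, map_mul, map_sum, map_ofNat]
    simp only [map_sub, map_pow, map_natCast, map_one]
    rw [← hζ.twelve_mul_sum_inv_one_sub_pow_mul_inv hn]
    refine congrArg _ (sum_congr rfl fun j hj => ?_)
    rw [map_mul, (hunit j hj).map_ringInverse, (hunit _ (hrefl j hj)).map_ringInverse]
    simp only [map_sub, map_pow, map_one]
  have htwo : IsUnit (2 : R) := by
    simpa only [map_ofNat] using (IsUnit.mk0 (2 : ℚ) two_ne_zero).map (algebraMap ℚ R)
  refine htwo.mul_left_cancel ?_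
  calc 2 * (24 * ∑ j ∈ Icc 1 (n - 1), (1 - t ^ j)⁻¹ʳ)
      = 24 * ∑ j ∈ Icc 1 (n - 1), ((1 - t ^ j)⁻¹ʳ + (1 - t ^ (n - j))⁻¹ʳ) := by
        rw [sum_add_distrib, sum_Icc_one_sub_one_reflect (fun j => (1 - t ^ j)⁻¹ʳ)]
        ring
    _ = 24 * ((n : R) - 1) + 2 * ((1 - t ^ n) *
          (12 * ∑ j ∈ Icc 1 (n - 1), (1 - t ^ j)⁻¹ʳ * (1 - t ^ (n - j))⁻¹ʳ)) := by
        rw [sum_congr rfl hpair, sum_add_distrib, sum_const, Nat.card_Icc, nsmul_one,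
          Nat.add_sub_cancel, Nat.cast_pred hn, ← mul_sum]
        ring
    _ = 2 * (12 * ((n : R) - 1) + ((n : R) ^ 2 - 1) * (1 - t ^ n)) := by
        rw [hres]
        ring

theorem twentyfour_mul_sum_inverse_geom_sum (hn : 0 < n) (hζ : IsPrimitiveRoot (χ t) n)
    (hker : ∀ x, χ x = 0 → (1 - t ^ n) * x = 0) (hunit : ∀ j ∈ Icc 1 (n - 1), IsUnit (1 - t ^ j)) :
    24 * ∑ j ∈ Icc 1 (n - 1), (∑ i ∈ range j, t ^ i)⁻¹ʳ
      = 12 * ((n : R) - 1) * (1 - t) + ((n : R) ^ 2 - 1) * ((1 - t) ^ 2 * ∑ i ∈ range n, t ^ i) := by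
  have hinv : ∀ j ∈ Icc 1 (n - 1), (∑ i ∈ range j, t ^ i)⁻¹ʳ = (1 - t) * (1 - t ^ j)⁻¹ʳ := by
    intro j hj
    rw [← mul_neg_geom_sum]
    exact Ring.inverse_eq_mul_inverse_mul (by rw [mul_neg_geom_sum]; exact hunit j hj)
  rw [sum_congr rfl hinv, ← mul_sum, mul_left_comm,
    twentyfour_mul_sum_inverse_one_sub_pow χ hn hζ hker hunit, ← mul_neg_geom_sum]
  ring

end RingInverse

section KernelSquare

variable {A B F : Type*} [CommRing A] [CommRing B] [FunLike F A B] [RingHomClass F A B] (f : F)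

def RingHom.kerSqLift : A ⧸ RingHom.ker f ^ 2 →+* B :=
  Ideal.Quotient.lift _ f fun _ ha => Ideal.pow_le_self two_ne_zero ha

@[simp]
theorem RingHom.kerSqLift_mk (a : A) : RingHom.kerSqLift f (Ideal.Quotient.mk _ a) = f a :=
  rfl

theorem RingHom.mk_mul_eq_zero_of_kerSqLift_eq_zero {u : A} (hu : f u = 0)
    {x : A ⧸ RingHom.ker f ^ 2} (hx : RingHom.kerSqLift f x = 0) :
    Ideal.Quotient.mk _ u * x = 0 := by
  obtain ⟨a, rfl⟩ := Ideal.Quotient.mk_surjective x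
  rw [← map_mul, Ideal.Quotient.eq_zero_iff_mem, pow_two]
  exact Ideal.mul_mem_mul hu hx

end KernelSquare

section Cyclotomic

variable {K : Type*} [Field K] [CharZero K] {n : ℕ} {ζ : K}

theorem IsPrimitiveRoot.ker_aeval_eq_span_cyclotomic (hζ : IsPrimitiveRoot ζ n) (hn : 0 < n) :
    RingHom.ker (aeval ζ : ℚ[X] →ₐ[ℚ] K) = Ideal.span {cyclotomic n ℚ} := by
  rw [minpoly.ker_aeval_eq_span_minpoly, ← cyclotomic_eq_minpoly_rat hζ hn]

theorem IsPrimitiveRoot.isUnit_mk_one_sub_X_pow (hζ : IsPrimitiveRoot ζ n) (hn : 0 < n) {j : ℕ}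
    (hj : j ≠ 0) (hjn : j < n) :
    IsUnit (Ideal.Quotient.mk (RingHom.ker (aeval ζ : ℚ[X] →ₐ[ℚ] K) ^ 2) (1 - X ^ j)) := by
  have : (RingHom.ker (aeval ζ : ℚ[X] →ₐ[ℚ] K)).IsMaximal := by
    rw [hζ.ker_aeval_eq_span_cyclotomic hn]
    exact PrincipalIdealRing.isMaximal_of_irreducible (cyclotomic.irreducible_rat hn)
  refine Ideal.Quotient.isUnit_mk_pow_of_notMem _ fun hmem => hζ.pow_ne_one_of_pos_of_lt hj hjn ?_
  have h := RingHom.mem_ker.mp hmem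
  simp only [map_sub, map_one, map_pow, aeval_X] at h
  exact (sub_eq_zero.mp h).symm

end Cyclotomic

theorem q_wolstenholme (n : ℕ) (hn : 1 ≤ n) :
    (Polynomial.cyclotomic n ℚ) ^ 2 ∣
      (24 * ∑ j ∈ Finset.Icc 1 (n - 1), ∏ k ∈ (Finset.Icc 1 (n - 1)).erase j, qInt k)
        - ((12 * (n - 1 : ℚ)) • ((1 : Polynomial ℚ) - Polynomial.X)
            + ((n^2 - 1 : ℚ)) • (((1 : Polynomial ℚ) - Polynomial.X) ^ 2 * qInt n))
          * ∏ j ∈ Finset.Icc 1 (n - 1), qInt j := by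
  obtain ⟨ζ, hζ⟩ : ∃ ζ : ℂ, IsPrimitiveRoot ζ n := ⟨_, Complex.isPrimitiveRoot_exp n (by omega)⟩
  set χ := RingHom.kerSqLift (aeval ζ : ℚ[X] →ₐ[ℚ] ℂ)
  set t := Ideal.Quotient.mk (RingHom.ker (aeval ζ : ℚ[X] →ₐ[ℚ] ℂ) ^ 2) X
  have hunit : ∀ j ∈ Icc 1 (n - 1), IsUnit (1 - t ^ j) := fun j hj => by
    have hj' := mem_Icc.mp hj
    simpa [t] using hζ.isUnit_mk_one_sub_X_pow hn (j := j) (by omega) (by omega)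
  have hker (x) (hx : χ x = 0) : (1 - t ^ n) * x = 0 := by
    have h := RingHom.mk_mul_eq_zero_of_kerSqLift_eq_zero _ (u := 1 - X ^ n)
      (by simp [hζ.pow_eq_one]) hx
    rwa [map_sub, map_one, map_pow] at h
  have key := twentyfour_mul_sum_inverse_geom_sum χ hn (by simpa [χ, t] using hζ) hker hunit
  rw [← Ideal.mem_span_singleton, ← Ideal.span_singleton_pow, ← hζ.ker_aeval_eq_span_cyclotomic hn,
    ← Ideal.Quotient.eq_zero_iff_mem, map_sub, sub_eq_zero]
  simp only [qInt, smul_eq_C_mul, map_mul, map_add, map_sub, map_sum, map_prod, map_pow,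
    map_natCast, map_ofNat, map_one]
  rw [sum_prod_erase_eq_sum_inverse_mul_prod fun j hj =>
      isUnit_of_mul_isUnit_right (mul_neg_geom_sum t j ▸ hunit j hj),
    ← mul_assoc, key]
end

section
/- Let A, B be nonzero integers, u_n the Lucas sequence with u_0 = 0, u_1 = 1, u_n = A·u_{n-1} − B·u_{n-2}, and for n ≥ 1 let w_n be the largest divisor of u_n coprime to u_1·u_2·...·u_{n-1}. Then for every n > 3, w_n is odd. -/
/-- The Lucas sequence u_n for parameters (A, B). -/
def lucasU (A B : ℤ) : ℕ → ℤ
  | 0 => 0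
  | 1 => 1
  | n + 2 => A * lucasU A B (n + 1) - B * lucasU A B n

/-- The companion Lucas sequence v_n for parameters (A, B). -/
def lucasV (A B : ℤ) : ℕ → ℤ
  | 0 => 2
  | 1 => A
  | n + 2 => A * lucasV A B (n + 1) - B * lucasV A B n

/-- `w` is the largest (positive) divisor of `u_n` coprime to `u_1, …, u_{n-1}`. -/
def IsWn (A B : ℤ) (n : ℕ) (w : ℤ) : Prop :=
  0 < w ∧ w ∣ lucasU A B n ∧ (∀ k, 1 ≤ k → k < n → IsCoprime w (lucasU A B k)) ∧
    ∀ d : ℤ, 0 < d → d ∣ lucasU A B n →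
      (∀ k, 1 ≤ k → k < n → IsCoprime d (lucasU A B k)) → d ≤ w

lemma lucasU_rec (A B : ℤ) (k : ℕ) :
    lucasU A B (k+2) = A * lucasU A B (k+1) - B * lucasU A B k := rfl

lemma parityOE (A B : ℤ) (hA : Odd A) (hB : Even B) :
    ∀ k, Odd (lucasU A B (k+1)) := by
  intro k
  induction k using Nat.strong_induction_on with
  | _ k ih =>
    match k with
    | 0 => simpa [lucasU] using odd_one
    | k + 1 =>
      rw [lucasU_rec]
      exact (hA.mul (ih k (by omega))).sub_even (hB.mul_right _)

lemma parityOO (A B : ℤ) (hA : Odd A) (hB : Odd B) :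
    ∀ m, Even (lucasU A B (3*m)) ∧ Odd (lucasU A B (3*m+1)) ∧ Odd (lucasU A B (3*m+2)) := by
  intro m
  induction m with
  | zero =>
    refine ⟨by simp [lucasU], by simpa [lucasU] using odd_one, ?_⟩
    simpa [lucasU_rec, lucasU] using hA
  | succ m ih =>
    obtain ⟨h0, h1, h2⟩ := ih
    have H3 : Even (lucasU A B (3*m+3)) := by
      rw [show 3*m+3 = (3*m+1)+2 from by ring, lucasU_rec]
      exact (hA.mul h2).sub_odd (hB.mul h1)
    have H4 : Odd (lucasU A B (3*m+4)) := by
      rw [show 3*m+4 = (3*m+2)+2 from by ring, lucasU_rec]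
      have h3' : lucasU A B (3*m+2+1) = lucasU A B (3*m+3) := by norm_num
      rw [h3']
      exact (H3.mul_left A).sub_odd (hB.mul h2)
    have H5 : Odd (lucasU A B (3*m+5)) := by
      rw [show 3*m+5 = (3*m+3)+2 from by ring, lucasU_rec]
      have h4' : lucasU A B (3*m+3+1) = lucasU A B (3*m+4) := by norm_num
      rw [h4']
      exact (hA.mul H4).sub_even (H3.mul_left B)
    refine ⟨?_, ?_, ?_⟩
    · rw [show 3*(m+1) = 3*m+3 from by ring]; exact H3
    · rw [show 3*(m+1)+1 = 3*m+4 from by ring]; exact H4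
    · rw [show 3*(m+1)+2 = 3*m+5 from by ring]; exact H5

theorem wn_odd (A B : ℤ) (hA : A ≠ 0) (hB : B ≠ 0) (n : ℕ) (hn : 3 < n)
    (w : ℤ) (hw : IsWn A B n w) : Odd w := by
  by_contra hodd
  have hev : Even w := Int.not_odd_iff_even.mp hodd
  have h2w : (2 : ℤ) ∣ w := hev.two_dvd
  obtain ⟨hwpos, hwdvd, hcop, _⟩ := hw
  have notunit2 : ¬ IsUnit (2 : ℤ) := by decide
  rcases Int.even_or_odd A with hAe | hAo
  · -- A even: u_2 = A is even, contradiction with coprimality at k = 2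
    have h2 : lucasU A B 2 = A := by simp [lucasU_rec, lucasU]
    have hc := hcop 2 (by norm_num) (by omega)
    have : (2:ℤ) ∣ lucasU A B 2 := by rw [h2]; exact hAe.two_dvd
    exact notunit2 (hc.isUnit_of_dvd' h2w this)
  · rcases Int.even_or_odd B with hBe | hBo
    · -- A odd, B even: all u_k (k ≥ 1) odd, but 2 ∣ w ∣ u_n
      have hun : Odd (lucasU A B n) := by
        have := parityOE A B hAo hBe (n - 1)
        rwa [Nat.sub_add_cancel (by omega)] at this
      have hev' : Even (lucasU A B n) := by
        obtain ⟨c, hc⟩ := h2w.trans hwdvd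
        exact ⟨c, by linarith⟩
      exact (Int.not_odd_iff_even.mpr hev') hun
    · -- A odd, B odd
      have h2un : (2 : ℤ) ∣ lucasU A B n := h2w.trans hwdvd
      have hev' : Even (lucasU A B n) := by
        obtain ⟨c, hc⟩ := h2un
        exact ⟨c, by linarith⟩
      rcases (show n % 3 = 0 ∨ n % 3 = 1 ∨ n % 3 = 2 by omega) with h | h | h
      · -- 3 ∣ n : contradiction with coprimality at k = 3
        have h3 : Even (lucasU A B 3) := by
          simpa using (parityOO A B hAo hBo 1).1
        have hc := hcop 3 (by norm_num) (by omega)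
        exact notunit2 (hc.isUnit_of_dvd' h2w h3.two_dvd)
      · obtain ⟨m, hm⟩ : ∃ m, n = 3*m+1 := ⟨n/3, by omega⟩
        have := (parityOO A B hAo hBo m).2.1
        rw [← hm] at this
        exact (Int.not_odd_iff_even.mpr hev') this
      · obtain ⟨m, hm⟩ : ∃ m, n = 3*m+2 := ⟨n/3, by omega⟩
        have := (parityOO A B hAo hBo m).2.2
        rw [← hm] at this
        exact (Int.not_odd_iff_even.mpr hev') this
end

section
/- Let A, B be nonzero integers, u_n the Lucas sequence with u_0 = 0, u_1 = 1, u_n = A·u_{n-1} − B·u_{n-2}, and for n ≥ 1 let w_n be the largest divisor of u_n coprime to u_1, ..., u_{n-1}. Then for every n > 4, gcd(w_n, 3) = 1. -/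
lemma lucasU_two (A B : ℤ) : lucasU A B 2 = A := by simp [lucasU]

lemma lucasU_three (A B : ℤ) : lucasU A B 3 = A * A - B := by
  simp only [lucasU, lucasU_two]; ring

lemma lucasU_four (A B : ℤ) : lucasU A B 4 = A * (A * A - B) - B * A := by
  simp only [lucasU, lucasU_two, lucasU_three]; ring

lemma aux_not_dvd (A B : ℤ) (hA : ¬ (3:ℤ) ∣ A) (hB : (3:ℤ) ∣ B) :
    ∀ m, ¬ (3:ℤ) ∣ lucasU A B (m + 1) := by
  intro m
  induction m using Nat.twoStepInduction with
  | zero => simp [lucasU]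
  | one => simpa [lucasU] using hA
  | more m ih ih2 =>
    show ¬ (3:ℤ) ∣ lucasU A B (m + 1 + 2)
    rw [lucasU]
    intro h
    have h1 : (3:ℤ) ∣ A * lucasU A B (m + 1 + 1) := by
      have : (3:ℤ) ∣ B * lucasU A B (m + 1) := hB.mul_right _
      omega
    rcases (Int.prime_three.dvd_mul.mp h1) with h | h
    · exact hA h
    · exact ih2 h

theorem wn_coprime_three (A B : ℤ) (hA : A ≠ 0) (hB : B ≠ 0) (n : ℕ) (hn : 4 < n)
    (w : ℤ) (hw : IsWn A B n w) : IsCoprime w (3 : ℤ) := by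
  by_contra hc
  have h3w : (3:ℤ) ∣ w := by
    by_contra h
    exact hc (isCoprime_comm.mp ((Prime.coprime_iff_not_dvd Int.prime_three).mpr h))
  have hun : (3:ℤ) ∣ lucasU A B n := h3w.trans hw.2.1
  have hnotunit : ¬ IsUnit (3:ℤ) := by decide
  have key : ∀ k, 1 ≤ k → k < n → ¬ (3:ℤ) ∣ lucasU A B k := by
    intro k hk1 hk2 hdvd
    exact hnotunit ((hw.2.2.1 k hk1 hk2).isUnit_of_dvd' h3w hdvd)
  have hZ : ∀ a : ZMod 3, a = 0 ∨ a = 1 ∨ a = 2 := by decide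
  rcases hZ (A : ZMod 3) with hA3 | hA3 | hA3
  · -- 3 ∣ A = u_2
    have : (3:ℤ) ∣ lucasU A B 2 := by
      rw [lucasU_two]
      exact_mod_cast (ZMod.intCast_zmod_eq_zero_iff_dvd A 3).mp hA3
    exact key 2 (by norm_num) (by omega) this
  all_goals {
    rcases hZ (B : ZMod 3) with hB3 | hB3 | hB3
    · -- 3 ∣ B, 3 ∤ A : no u_k divisible
      have hdA : ¬ (3:ℤ) ∣ A := by
        intro h
        have : ((A : ZMod 3)) = 0 :=
          (ZMod.intCast_zmod_eq_zero_iff_dvd A 3).mpr (by exact_mod_cast h)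
        rw [hA3] at this; exact absurd this (by decide)
      have hdB : (3:ℤ) ∣ B := by
        exact_mod_cast (ZMod.intCast_zmod_eq_zero_iff_dvd B 3).mp hB3
      obtain ⟨m, rfl⟩ : ∃ m, n = m + 1 := ⟨n - 1, by omega⟩
      exact aux_not_dvd A B hdA hdB m hun
    · -- B ≡ 1 : 3 ∣ u_3
      have : (3:ℤ) ∣ lucasU A B 3 := by
        rw [lucasU_three]
        have : ((A * A - B : ℤ) : ZMod 3) = 0 := by push_cast; rw [hA3, hB3]; decide
        exact_mod_cast (ZMod.intCast_zmod_eq_zero_iff_dvd _ 3).mp this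
      exact key 3 (by norm_num) (by omega) this
    · -- B ≡ 2 : 3 ∣ u_4
      have : (3:ℤ) ∣ lucasU A B 4 := by
        rw [lucasU_four]
        have : ((A * (A * A - B) - B * A : ℤ) : ZMod 3) = 0 := by
          push_cast; rw [hA3, hB3]; decide
        exact_mod_cast (ZMod.intCast_zmod_eq_zero_iff_dvd _ 3).mp this
      exact key 4 (by norm_num) (by omega) this
  }
end

section
/- Let A, B be nonzero integers, u_n the Lucas sequence, w_n the largest divisor of u_n coprime to u_1, ..., u_{n-1}, and Φ_n(α,β) the homogenized n-th cyclotomic polynomial evaluated at the roots α, β of x² − Ax + B. Then w_n divides Φ_n(α,β) (as elements of the ring of integers of ℚ(√(A²−4B)), equivalently Φ_n(α,β)/w_n is an algebraic integer; in fact Φ_n(α,β) ∈ ℤ and w_n | Φ_n(α,β) in ℤ). -/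
/-- The homogenized `l`-th cyclotomic polynomial `β^{φ(l)}·Φ_l(α/β)` evaluated at `(a, b)`. -/
noncomputable def cycHom (l : ℕ) {R : Type*} [CommRing R] (a b : R) : R :=
  ∑ i ∈ Finset.range (Nat.totient l + 1),
    (Polynomial.cyclotomic l ℤ).coeff i • (a ^ i * b ^ (Nat.totient l - i))

open Polynomial Finset

lemma cycHom_map {R S : Type*} [CommRing R] [CommRing S] (f : R →+* S) (l : ℕ) (a b : R) :
    f (cycHom l a b) = cycHom l (f a) (f b) := by
  simp [cycHom, map_sum, map_zsmul, map_mul, map_pow]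

lemma L0 (n : ℕ) (hn : 1 ≤ n) :
    ∏ d ∈ n.divisors.erase 1, Polynomial.cyclotomic d ℤ = ∑ i ∈ range n, (X : ℤ[X]) ^ i := by
  have h1 : (1:ℕ) ∈ n.divisors := Nat.one_mem_divisors.2 (by omega)
  have h2 := prod_cyclotomic_eq_X_pow_sub_one (show 0 < n by omega) ℤ
  rw [← Finset.mul_prod_erase _ _ h1, cyclotomic_one] at h2
  have h3 := geom_sum_mul (X : ℤ[X]) n
  have hX : (X - 1 : ℤ[X]) ≠ 0 := by
    intro h
    have := congrArg (fun p => Polynomial.coeff p 1) h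
    simp [Polynomial.coeff_one] at this
  apply mul_left_cancel₀ hX
  rw [h2, mul_comm (X - 1 : ℤ[X]), h3]

lemma cycHom_eq (l : ℕ) (a b : ℂ) (hb : b ≠ 0) :
    cycHom l a b = b ^ l.totient * Polynomial.eval (a / b) (Polynomial.cyclotomic l ℂ) := by
  rw [eval_eq_sum_range, natDegree_cyclotomic, Finset.mul_sum, cycHom]
  refine Finset.sum_congr rfl fun i hi => ?_
  have hi' : i ≤ l.totient := by simpa [Nat.lt_succ_iff] using hi
  have hc : (cyclotomic l ℂ).coeff i = ((cyclotomic l ℤ).coeff i : ℂ) := by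
    rw [← map_cyclotomic l (Int.castRingHom ℂ), coeff_map]; rfl
  rw [hc, zsmul_eq_mul, div_pow]
  have : b ^ l.totient = b ^ (l.totient - i) * b ^ i := by
    rw [← pow_add, Nat.sub_add_cancel hi']
  rw [this]
  field_simp

lemma prod_cycHom (n : ℕ) (hn : 1 ≤ n) (a b : ℂ) (hb : b ≠ 0) :
    ∏ d ∈ n.divisors.erase 1, cycHom d a b = ∑ i ∈ range n, a ^ i * b ^ (n - 1 - i) := by
  have hsum : ∑ d ∈ n.divisors.erase 1, d.totient = n - 1 := by
    have h1 : (1:ℕ) ∈ n.divisors := Nat.one_mem_divisors.2 (by omega)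
    have := Nat.sum_totient n
    rw [← Finset.add_sum_erase _ _ h1] at this
    simp [Nat.totient_one] at this
    omega
  calc ∏ d ∈ n.divisors.erase 1, cycHom d a b
      = ∏ d ∈ n.divisors.erase 1, (b ^ d.totient *
          Polynomial.eval (a / b) (Polynomial.cyclotomic d ℂ)) := by
        exact Finset.prod_congr rfl fun d _ => cycHom_eq d a b hb
    _ = b ^ (n-1) * Polynomial.eval (a / b) (∏ d ∈ n.divisors.erase 1, Polynomial.cyclotomic d ℂ) := by
        rw [Finset.prod_mul_distrib, Finset.prod_pow_eq_pow_sum, hsum, Polynomial.eval_prod]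
    _ = ∑ i ∈ range n, a ^ i * b ^ (n - 1 - i) := by
        have hmap : ∏ d ∈ n.divisors.erase 1, Polynomial.cyclotomic d ℂ
            = ∑ i ∈ range n, (Polynomial.X : ℂ[X]) ^ i := by
          have := congrArg (Polynomial.map (Int.castRingHom ℂ)) (L0 n hn)
          simpa [Polynomial.map_prod, Polynomial.map_sum, map_cyclotomic] using this
        rw [hmap, Polynomial.eval_finset_sum, Finset.mul_sum]
        refine Finset.sum_congr rfl fun i hi => ?_
        have hi' : i ≤ n - 1 := by
          have := Finset.mem_range.1 hi; omega
        have : b ^ (n-1) = b ^ (n - 1 - i) * b ^ i := by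
          rw [← pow_add, Nat.sub_add_cancel hi']
        simp only [Polynomial.eval_pow, Polynomial.eval_X, div_pow, this]
        field_simp

lemma lucasU_sum (A B : ℤ) (α β : ℂ) (hsum : α + β = (A:ℂ)) (hprod : α * β = (B:ℂ)) (n : ℕ) :
    (lucasU A B n : ℂ) = ∑ i ∈ range n, α ^ i * β ^ (n - 1 - i) := by
  induction n using Nat.strong_induction_on with
  | _ n ih =>
    match n with
    | 0 => simp [lucasU]
    | 1 => simp [lucasU]
    | (m+2) =>
      have h1 := ih (m+1) (by omega)
      have h0 := ih m (by omega)
      have : (lucasU A B (m+2) : ℂ) = (α+β) * (lucasU A B (m+1) : ℂ) - (α*β) * (lucasU A B m : ℂ) := by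
        rw [hsum, hprod]; push_cast [lucasU]; ring
      rw [this, h1, h0]
      have hβ : ∀ i ∈ range (m+1), β * (α ^ i * β ^ (m - i)) = α ^ i * β ^ (m + 1 - i) := by
        intro i hi
        have hi' : i ≤ m := by have := Finset.mem_range.1 hi; omega
        have : m + 1 - i = (m - i) + 1 := by omega
        rw [this, pow_succ]; ring
      have hα : ∀ i ∈ range (m+1), α * (α ^ i * β ^ (m - i)) = α ^ (i+1) * β ^ (m - i) := by
        intro i _; rw [pow_succ]; ring
      have hαβ : ∀ i ∈ range m, (α*β) * (α ^ i * β ^ (m - 1 - i)) = α ^ (i+1) * β ^ (m - i) := by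
        intro i hi
        have hi' : i < m := Finset.mem_range.1 hi
        have h3 : m - i = (m - 1 - i) + 1 := by omega
        rw [h3, pow_succ, pow_succ]; ring
      calc (α+β) * (∑ i ∈ range (m+1), α ^ i * β ^ (m + 1 - 1 - i))
            - (α*β) * (∑ i ∈ range m, α ^ i * β ^ (m - 1 - i))
          = (∑ i ∈ range (m+1), α ^ (i+1) * β ^ (m - i))
            + (∑ i ∈ range (m+1), α ^ i * β ^ (m + 1 - i))
            - (∑ i ∈ range m, α ^ (i+1) * β ^ (m - i)) := by
            rw [add_mul, Finset.mul_sum, Finset.mul_sum, Finset.mul_sum]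
            rw [Finset.sum_congr rfl hαβ, Finset.sum_congr rfl (by simpa using hα)]
            congr 1
            congr 1
            refine Finset.sum_congr rfl fun i hi => ?_
            have : m + 1 - 1 - i = m - i := by omega
            rw [this]
            exact hβ i hi
        _ = α ^ (m+1) + ∑ i ∈ range (m+1), α ^ i * β ^ (m + 1 - i) := by
            rw [Finset.sum_range_succ (fun i => α ^ (i+1) * β ^ (m - i))]
            simp
            ring
        _ = ∑ i ∈ range (m+2), α ^ i * β ^ (m + 2 - 1 - i) := by
            rw [Finset.sum_range_succ (fun i => α ^ i * β ^ (m + 2 - 1 - i))]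
            simp only [show m + 2 - 1 = m + 1 from rfl]
            rw [Nat.sub_self]
            simp [add_comm]

lemma root_integral0 (A B : ℤ) (x y : ℂ) (hsum : x + y = (A:ℂ)) (hprod : x * y = (B:ℂ)) :
    IsIntegral ℤ x := by
  refine ⟨X^2 - Polynomial.C A * X + Polynomial.C B, by monicity!, ?_⟩
  have h : (Polynomial.aeval x) (X^2 - Polynomial.C A * X + Polynomial.C B)
      = x^2 - (A:ℂ)*x + (B:ℂ) := by
    simp
  rw [show eval₂ (algebraMap ℤ ℂ) x (X ^ 2 - Polynomial.C A * X + Polynomial.C B)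
      = (Polynomial.aeval x) (X^2 - Polynomial.C A * X + Polynomial.C B) from rfl,
    h, ← hsum, ← hprod]
  ring

lemma root_integral (A B : ℤ) (x y : ℂ) (hsum : x + y = (A:ℂ)) (hprod : x * y = (B:ℂ)) :
    IsIntegral ℤ x := by
  refine ⟨X^2 - Polynomial.C A * X + Polynomial.C B, by monicity!, ?_⟩
  have h : (Polynomial.aeval x) (X^2 - Polynomial.C A * X + Polynomial.C B)
      = x^2 - (A:ℂ)*x + (B:ℂ) := by
    simp
  rw [show eval₂ (algebraMap ℤ ℂ) x (X ^ 2 - Polynomial.C A * X + Polynomial.C B)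
      = (Polynomial.aeval x) (X^2 - Polynomial.C A * X + Polynomial.C B) from rfl,
    h, ← hsum, ← hprod]
  ring

theorem wn_dvd_cycHom (A B : ℤ) (hA : A ≠ 0) (hB : B ≠ 0) (n : ℕ) (hn : 1 ≤ n)
    (w : ℤ) (hw : IsWn A B n w)
    (α β : ℂ) (hsum : α + β = (A : ℂ)) (hprod : α * β = (B : ℂ)) :
    ∃ z : ℂ, IsIntegral ℤ z ∧ cycHom n α β = (w : ℂ) * z := by
  have hβ : β ≠ 0 := by
    intro h
    apply hB
    have : (B : ℂ) = 0 := by rw [← hprod, h, mul_zero]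
    exact_mod_cast this
  have hαI : IsIntegral ℤ α := root_integral A B α β hsum hprod
  have hβI : IsIntegral ℤ β := root_integral A B β α (by rw [add_comm]; exact hsum)
    (by rw [mul_comm]; exact hprod)
  rcases eq_or_lt_of_le hn with h1 | h2
  · -- n = 1
    obtain rfl : n = 1 := h1.symm
    have hw1 : w = 1 := by
      have hd := hw.2.1
      have h1 : lucasU A B 1 = 1 := rfl
      rw [h1] at hd
      have := Int.isUnit_iff.mp (isUnit_of_dvd_one hd)
      have hpos := hw.1
      omega
    refine ⟨α - β, hαI.sub hβI, ?_⟩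
    rw [hw1]
    have : cycHom 1 α β = α - β := by
      simp [cycHom, Polynomial.cyclotomic_one, Finset.sum_range_succ, Nat.totient_one,
        Polynomial.coeff_sub, Polynomial.coeff_one, Polynomial.coeff_X]
      ring
    rw [this]
    push_cast
    ring
  · -- n ≥ 2
    set O := integralClosure ℤ ℂ
    have haO : α ∈ O := hαI
    have hbO : β ∈ O := hβI
    set a : O := ⟨α, haO⟩
    set b : O := ⟨β, hbO⟩
    set f : O →+* ℂ := (Subalgebra.toSubring O).subtype with hf
    have finj : Function.Injective f := Subtype.coe_injective
    have hcoe : ∀ d, f (cycHom d a b) = cycHom d α β := by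
      intro d
      rw [cycHom_map]
      rfl
    have key : ∀ m, 1 ≤ m → (lucasU A B m : O) = ∏ d ∈ m.divisors.erase 1, cycHom d a b := by
      intro m hm
      apply finj
      rw [map_intCast, map_prod]
      calc (lucasU A B m : ℂ) = ∑ i ∈ range m, α ^ i * β ^ (m - 1 - i) :=
            lucasU_sum A B α β hsum hprod m
        _ = ∏ d ∈ m.divisors.erase 1, cycHom d α β := (prod_cycHom m hm α β hβ).symm
        _ = ∏ d ∈ m.divisors.erase 1, f (cycHom d a b) := by
            exact Finset.prod_congr rfl fun d _ => (hcoe d).symm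
    have hn2 : n ∈ n.divisors.erase 1 :=
      Finset.mem_erase.2 ⟨by omega, Nat.mem_divisors_self n (by omega)⟩
    have hun : (lucasU A B n : O)
        = cycHom n a b * ∏ d ∈ (n.divisors.erase 1).erase n, cycHom d a b := by
      rw [key n hn, ← Finset.mul_prod_erase _ _ hn2]
    have hcop : IsCoprime ((w : ℤ) : O) (∏ d ∈ (n.divisors.erase 1).erase n, cycHom d a b) := by
      apply IsCoprime.prod_right
      intro d hd
      have hd' := hd
      simp only [Finset.mem_erase, Nat.mem_divisors] at hd'
      obtain ⟨hdn, hd1, hddvd, -⟩ := hd'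
      have hd0 : 1 ≤ d := Nat.pos_of_dvd_of_pos hddvd (by omega)
      have hdlt : d < n := lt_of_le_of_ne (Nat.le_of_dvd (by omega) hddvd) hdn
      have hcw : IsCoprime ((w : ℤ) : O) ((lucasU A B d : ℤ) : O) := by
        have := (hw.2.2.1 d hd0 hdlt).map (Int.castRingHom O)
        simpa using this
      have hdiv : cycHom d a b ∣ ((lucasU A B d : ℤ) : O) := by
        rw [key d hd0]
        exact Finset.dvd_prod_of_mem _
          (Finset.mem_erase.2 ⟨hd1, Nat.mem_divisors_self d (by omega)⟩)
      exact hcw.of_isCoprime_of_dvd_right hdiv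
    have hwdvd : ((w : ℤ) : O) ∣ ((lucasU A B n : ℤ) : O) := by
      obtain ⟨c, hc⟩ := hw.2.1
      exact ⟨(c : O), by rw [hc]; push_cast; ring⟩
    rw [hun] at hwdvd
    obtain ⟨z, hz⟩ := hcop.dvd_of_dvd_mul_right hwdvd
    refine ⟨(z : ℂ), z.2, ?_⟩
    have := congrArg f hz
    rw [hcoe, map_mul, map_intCast] at this
    exact this
end
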